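/- Let n_0 = 1 < n_1 < n_2 < ⋯ be integers, ψ(t) = √t·√(log₂(4/t)) for 0 < t ≤ 1, α_k = 2^{k/2}/√(k+2), and w_m(t) = max_{n_m ≤ k < n_{m+1}} α_k·1_{(0,2^{-k}]}(t) for m ≥ 0. Then for every r ∈ ℕ and all nonnegative reals c_0, …, c_r, the function w(t) = max_{0 ≤ m ≤ r} c_m·w_m(t) satisfies sup_{0 < t ≤ 1} (ψ(t)/t)·∫_0^t w(s) ds ≤ 2·max_{0 ≤ m ≤ r} c_m. -/

import Mathlib

/-!
With `x = 2^k s ≤ 1`, the inequality `α_k ψ(s) ≤ 1` amounts to `x (k + 2 - log₂ x) ≤ k + 2`, which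
follows from `-x log x ≤ 1 - x` and `log 2 > 1/2`. Hence `w ≤ (max c_m) / ψ` pointwise. Since
`log₂ (4/s) ≥ log₂ (4/t)` for `s ≤ t`, integrating `1/ψ` over `(0, t]` costs at most
`∫₀ᵗ s^{-1/2} ds / √(log₂ (4/t)) = 2t/ψ(t)`.
-/

open Real MeasureTheory Set

noncomputable def psi (t : ℝ) : ℝ := √t * √(logb 2 (4 / t))

noncomputable def alpha (k : ℕ) : ℝ := 2 ^ ((k : ℝ) / 2) / √(k + 2)

lemma psi_nonneg (t : ℝ) : 0 ≤ psi t := by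
  unfold psi; positivity

lemma logb_four_div_pos {t : ℝ} (ht0 : 0 < t) (ht1 : t ≤ 1) : 0 < logb 2 (4 / t) :=
  logb_pos one_lt_two (by rw [lt_div_iff₀ ht0]; linarith)

lemma psi_pos {t : ℝ} (ht0 : 0 < t) (ht1 : t ≤ 1) : 0 < psi t :=
  mul_pos (sqrt_pos.2 ht0) (sqrt_pos.2 (logb_four_div_pos ht0 ht1))

lemma two_pow_mul_logb_four_div_le {k : ℕ} {s : ℝ} (hs : 0 < s) (hks : 2 ^ k * s ≤ 1) :
    2 ^ k * s * logb 2 (4 / s) ≤ k + 2 := by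
  set x := 2 ^ k * s with hx_def
  have hx : 0 < x := by positivity
  have hlog2 : 1 / 2 < log 2 := lt_trans (by norm_num) log_two_gt_d9
  have hlog : log (4 / s) = (k + 2) * log 2 - log x := by
    have : (4 : ℝ) / s = 2 ^ (k + 2) / x := by
      rw [hx_def, pow_add]; field_simp; norm_num
    rw [this, log_div (by positivity) hx.ne', log_pow]; push_cast; ring
  have hxlog : -(x * log x) ≤ 1 - x := by
    have h := mul_le_mul_of_nonneg_left (one_sub_inv_le_log_of_pos hx) hx.le
    rw [mul_sub, mul_one, mul_inv_cancel₀ hx.ne'] at h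
    linarith
  have hk : (0 : ℝ) ≤ k := k.cast_nonneg
  rw [logb, hlog, mul_div_assoc', div_le_iff₀ (by linarith)]
  nlinarith [mul_nonneg (sub_nonneg.2 hks) (by linarith : (0 : ℝ) ≤ 2 * log 2 - 1),
    mul_nonneg (mul_nonneg (sub_nonneg.2 hks) hk) (by linarith : (0 : ℝ) ≤ log 2)]

lemma alpha_mul_psi_le_one {k : ℕ} {s : ℝ} (hs : 0 < s) (hsk : s ≤ 2 ^ (-(k : ℤ))) :
    alpha k * psi s ≤ 1 := by
  have hks : 2 ^ k * s ≤ 1 := by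
    rw [zpow_neg, zpow_natCast] at hsk
    rwa [← le_div_iff₀' (by positivity), one_div]
  have hs1 : s ≤ 1 := (le_mul_of_one_le_left hs.le (one_le_pow₀ one_le_two)).trans hks
  have hsq : (alpha k * psi s) ^ 2 = 2 ^ k * s * logb 2 (4 / s) / (k + 2) := by
    have h2 : ((2 : ℝ) ^ ((k : ℝ) / 2)) ^ 2 = 2 ^ k := by
      rw [← rpow_natCast, ← rpow_mul (by norm_num)]; norm_num
    rw [alpha, psi, mul_pow, div_pow, mul_pow, h2, sq_sqrt (by positivity), sq_sqrt hs.le,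
      sq_sqrt (logb_four_div_pos hs hs1).le]
    ring
  refine (pow_le_one_iff_of_nonneg (by unfold alpha; positivity [psi_nonneg s]) two_ne_zero).1 ?_
  rw [hsq, div_le_one (by positivity)]
  exact two_pow_mul_logb_four_div_le hs hks

lemma alpha_mul_indicator_le_inv_psi (k : ℕ) (s : ℝ) :
    alpha k * (Ioc 0 ((2 : ℝ) ^ (-(k : ℤ)))).indicator (fun _ => 1) s ≤ (psi s)⁻¹ := by
  by_cases hs : s ∈ Ioc 0 ((2 : ℝ) ^ (-(k : ℤ)))
  · rw [indicator_of_mem hs, mul_one]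
    have hs1 : s ≤ 1 := hs.2.trans (zpow_le_one_of_nonpos₀ one_le_two (by omega))
    rw [← one_div, le_div_iff₀ (psi_pos hs.1 hs1)]
    exact alpha_mul_psi_le_one hs.1 hs.2
  · rw [indicator_of_notMem hs, mul_zero]
    exact inv_nonneg.2 (psi_nonneg s)

lemma sup'_mul_sup'_alpha_indicator_le {ι : Type*} (S : Finset ι) (hS : S.Nonempty)
    (c : ι → ℝ) (hc : ∀ m ∈ S, 0 ≤ c m) (K : ι → Finset ℕ) (hK : ∀ m, (K m).Nonempty) (s : ℝ) :
    S.sup' hS (fun m => c m * (K m).sup' (hK m)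
        fun k => alpha k * (Ioc 0 ((2 : ℝ) ^ (-(k : ℤ)))).indicator (fun _ => 1) s) ≤
      S.sup' hS c * (psi s)⁻¹ := by
  refine Finset.sup'_le _ _ fun m hm => ?_
  calc c m * _ ≤ c m * (psi s)⁻¹ := by
        gcongr
        · exact hc m hm
        · exact Finset.sup'_le _ _ fun k _ => alpha_mul_indicator_le_inv_psi k s
    _ ≤ S.sup' hS c * (psi s)⁻¹ := by
        gcongr
        · exact inv_nonneg.2 (psi_nonneg s)
        · exact Finset.le_sup' c hm

lemma lintegral_inv_sqrt {t : ℝ} (ht : 0 ≤ t) :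
    ∫⁻ s in Ioc 0 t, ENNReal.ofReal (√s)⁻¹ = ENNReal.ofReal (2 * √t) := by
  have hrpow : EqOn (fun s => ENNReal.ofReal (√s)⁻¹)
      (fun s => ENNReal.ofReal (s ^ (-(1 / 2) : ℝ))) (Ioc 0 t) := by
    intro s hs
    simp only [sqrt_eq_rpow, rpow_neg hs.1.le]
  rw [setLIntegral_congr_fun measurableSet_Ioc hrpow, ← ofReal_integral_eq_lintegral_ofReal]
  · rw [← intervalIntegral.integral_of_le ht, integral_rpow (by norm_num)]
    congr 1
    rw [sqrt_eq_rpow]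
    norm_num
    ring
  · exact (intervalIntegrable_iff_integrableOn_Ioc_of_le ht).1
      (intervalIntegral.intervalIntegrable_rpow' (by norm_num))
  · filter_upwards [ae_restrict_mem measurableSet_Ioc] with s hs
    exact rpow_nonneg hs.1.le _

lemma lintegral_inv_psi_le {t : ℝ} (ht0 : 0 < t) (ht1 : t ≤ 1) :
    ∫⁻ s in Ioc 0 t, ENNReal.ofReal (psi s)⁻¹ ≤ ENNReal.ofReal (2 * t / psi t) := by
  have hL : 0 < √(logb 2 (4 / t)) := sqrt_pos.2 (logb_four_div_pos ht0 ht1)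
  have hpointwise : ∀ s ∈ Ioc 0 t, ENNReal.ofReal (psi s)⁻¹ ≤
      ENNReal.ofReal (√(logb 2 (4 / t)))⁻¹ * ENNReal.ofReal (√s)⁻¹ := by
    rintro s ⟨hs0, hst⟩
    rw [← ENNReal.ofReal_mul (by positivity), psi, mul_inv, mul_comm]
    gcongr
    exact one_lt_two
  calc ∫⁻ s in Ioc 0 t, ENNReal.ofReal (psi s)⁻¹
      ≤ ∫⁻ s in Ioc 0 t, ENNReal.ofReal (√(logb 2 (4 / t)))⁻¹ * ENNReal.ofReal (√s)⁻¹ :=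
        setLIntegral_mono' measurableSet_Ioc hpointwise
    _ = ENNReal.ofReal (√(logb 2 (4 / t)))⁻¹ * ENNReal.ofReal (2 * √t) := by
        rw [lintegral_const_mul' _ _ ENNReal.ofReal_ne_top, lintegral_inv_sqrt ht0.le]
    _ = ENNReal.ofReal (2 * t / psi t) := by
        rw [← ENNReal.ofReal_mul (by positivity), psi]
        congr 1
        have := sqrt_pos.2 ht0
        field_simp
        rw [sq_sqrt ht0.le]

theorem stmt15_general (n : ℕ → ℕ) (hn : StrictMono n)
    (r : ℕ) (c : ℕ → ℝ) (hc : ∀ m : ℕ, m ≤ r → 0 ≤ c m) :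
    (⨆ t : Set.Ioc (0 : ℝ) 1,
      ENNReal.ofReal ((Real.sqrt (t : ℝ) * Real.sqrt (Real.logb 2 (4 / (t : ℝ)))) / (t : ℝ)) *
        ∫⁻ s in Set.Ioc (0 : ℝ) (t : ℝ), ENNReal.ofReal
          ((Finset.range (r + 1)).sup' Finset.nonempty_range_add_one fun m =>
            c m * (Finset.Ico (n m) (n (m + 1))).sup'
              (Finset.nonempty_Ico.mpr (hn (Nat.lt_succ_self m)))
              fun k => (2 : ℝ) ^ ((k : ℝ) / 2) / Real.sqrt (k + 2) *
                (Set.Ioc (0 : ℝ) ((2 : ℝ) ^ (-(k : ℤ)))).indicator (fun _ => (1 : ℝ)) s)) ≤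
      ENNReal.ofReal (2 * (Finset.range (r + 1)).sup' Finset.nonempty_range_add_one c) := by
  set C := (Finset.range (r + 1)).sup' Finset.nonempty_range_add_one c
  have hc' : ∀ m ∈ Finset.range (r + 1), 0 ≤ c m :=
    fun m hm => hc m (Nat.lt_succ_iff.1 (Finset.mem_range.1 hm))
  have hC : 0 ≤ C := (hc' 0 (by simp)).trans (Finset.le_sup' c (by simp))
  refine iSup_le fun ⟨t, ht0, ht1⟩ => ?_
  calc ENNReal.ofReal (psi t / t) * ∫⁻ s in Ioc 0 t, ENNReal.ofReal _
      ≤ ENNReal.ofReal (psi t / t) *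
          ∫⁻ s in Ioc 0 t, ENNReal.ofReal C * ENNReal.ofReal (psi s)⁻¹ := by
        gcongr with s
        rw [← ENNReal.ofReal_mul hC]
        exact ENNReal.ofReal_le_ofReal (sup'_mul_sup'_alpha_indicator_le _ _ c hc' _ _ s)
    _ ≤ ENNReal.ofReal (psi t / t) * (ENNReal.ofReal C * ENNReal.ofReal (2 * t / psi t)) := by
        rw [lintegral_const_mul' _ _ ENNReal.ofReal_ne_top]
        gcongr
        exact lintegral_inv_psi_le ht0 ht1
    _ = ENNReal.ofReal (2 * C) := by
        have := psi_pos ht0 ht1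
        rw [← ENNReal.ofReal_mul hC, ← ENNReal.ofReal_mul (by positivity)]
        congr 1
        field_simp

/-- With `n_0 = 1 < n_1 < ⋯`, `ψ(t) = √t·√(log₂(4/t))`, `α_k = 2^{k/2}/√(k+2)`,
`w_m(t) = max_{n_m ≤ k < n_{m+1}} α_k·1_{(0,2^{-k}]}(t)` and
`w(t) = max_{0 ≤ m ≤ r} c_m·w_m(t)` for nonnegative `c_0,…,c_r`, one has
`sup_{0<t≤1} (ψ(t)/t)·∫_0^t w(s) ds ≤ 2·max_{0≤m≤r} c_m`. -/
theorem stmt15 (n : ℕ → ℕ) (hn0 : n 0 = 1) (hn : StrictMono n)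
    (r : ℕ) (c : ℕ → ℝ) (hc : ∀ m : ℕ, m ≤ r → 0 ≤ c m) :
    (⨆ t : Set.Ioc (0 : ℝ) 1,
      ENNReal.ofReal ((Real.sqrt (t : ℝ) * Real.sqrt (Real.logb 2 (4 / (t : ℝ)))) / (t : ℝ)) *
        ∫⁻ s in Set.Ioc (0 : ℝ) (t : ℝ), ENNReal.ofReal
          ((Finset.range (r + 1)).sup' Finset.nonempty_range_add_one fun m =>
            c m * (Finset.Ico (n m) (n (m + 1))).sup'
              (Finset.nonempty_Ico.mpr (hn (Nat.lt_succ_self m)))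
              fun k => (2 : ℝ) ^ ((k : ℝ) / 2) / Real.sqrt (k + 2) *
                (Set.Ioc (0 : ℝ) ((2 : ℝ) ^ (-(k : ℤ)))).indicator (fun _ => (1 : ℝ)) s)) ≤
      ENNReal.ofReal (2 * (Finset.range (r + 1)).sup' Finset.nonempty_range_add_one c) :=
  stmt15_general n hn r c hc
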